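/- arXiv:1712.02242 — 3 statements merged into one kernel-verified Lean document; each statement's English description precedes it below -/
import Mathlib

section
/- Let 𝔤 be a finite-dimensional real Lie algebra, 𝔤₁ ⊆ 𝔤 a linear subspace, and k an integer with 1 ≤ k ≤ dim 𝔤₁. Let N ≥ 1 be an integer and equip 𝔤 × ℝ^N with the product Lie bracket [(X,s),(Y,t)] := ([X,Y],0) (so ℝ^N is an abelian factor). Then (𝔤, 𝔤₁) satisfies property 𝒞_k if and only if (𝔤 × ℝ^N, 𝔤₁ × ℝ^N) satisfies property 𝒞_k. -/
open Module

section Aux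
variable {M M' : Type*} [AddCommGroup M] [Module ℝ M] [AddCommGroup M'] [Module ℝ M']

lemma finrank_prod_submodule [FiniteDimensional ℝ M] [FiniteDimensional ℝ M']
    (p : Submodule ℝ M) (q : Submodule ℝ M') :
    finrank ℝ ↥(p.prod q) = finrank ℝ ↥p + finrank ℝ ↥q := by
  have e : ↥(p.prod q) ≃ₗ[ℝ] ↥p × ↥q :=
    { toFun := fun x => (⟨x.1.1, x.2.1⟩, ⟨x.1.2, x.2.2⟩)
      invFun := fun y => ⟨(y.1.1, y.2.1), ⟨y.1.2, y.2.2⟩⟩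
      map_add' := fun x y => rfl
      map_smul' := fun c x => rfl
      left_inv := fun x => rfl
      right_inv := fun y => rfl }
  rw [e.finrank_eq, Module.finrank_prod]

lemma exists_submodule_finrank_eq [FiniteDimensional ℝ M] (p : Submodule ℝ M) (n : ℕ)
    (h : n ≤ finrank ℝ ↥p) : ∃ q : Submodule ℝ M, q ≤ p ∧ finrank ℝ ↥q = n := by
  classical
  let b := finBasis ℝ ↥p
  have hli : LinearIndependent ℝ (b ∘ Fin.castLE h) :=
    b.linearIndependent.comp _ (Fin.castLE_injective h)
  refine ⟨(Submodule.span ℝ (Set.range (b ∘ Fin.castLE h))).map p.subtype,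
    Submodule.map_subtype_le _ _, ?_⟩
  rw [Submodule.finrank_map_subtype_eq, finrank_span_eq_card hli, Fintype.card_fin]
end Aux


/-- Property 𝒞_k for a pair (𝔤, 𝔤₁): every subspace 𝔴 ⊆ 𝔤₁ of codimension `k` in 𝔤₁ admits a
`k`-dimensional commutative complementary subspace 𝔥 ⊆ 𝔤₁, i.e. `[𝔥, 𝔥] = 0` and
`𝔤₁ = 𝔴 ⊕ 𝔥`. -/
def PropertyC (L : Type*) [LieRing L] [LieAlgebra ℝ L] (g1 : Submodule ℝ L) (k : ℕ) : Prop :=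
  ∀ w : Submodule ℝ L, w ≤ g1 → finrank ℝ ↥w = finrank ℝ ↥g1 - k →
    ∃ h : Submodule ℝ L, h ≤ g1 ∧ finrank ℝ ↥h = k ∧
      (∀ x ∈ h, ∀ y ∈ h, ⁅x, y⁆ = 0) ∧ w ⊓ h = ⊥ ∧ w ⊔ h = g1

/-- The product Lie ring structure on `𝔤 × ℝᴺ` with bracket `[(X,s),(Y,t)] = ([X,Y], 0)`,
so that `ℝᴺ` is an abelian factor. -/
instance prodLieRing (L : Type*) [LieRing L] (N : ℕ) : LieRing (L × (Fin N → ℝ)) :=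
  { (inferInstance : AddCommGroup (L × (Fin N → ℝ))) with
    bracket := fun p q => (⁅p.1, q.1⁆, 0)
    add_lie := fun x y z => by
      show (⁅(x + y).1, z.1⁆, (0 : Fin N → ℝ))
          = (⁅x.1, z.1⁆, (0 : Fin N → ℝ)) + (⁅y.1, z.1⁆, (0 : Fin N → ℝ))
      simp [Prod.ext_iff, add_lie]
    lie_add := fun x y z => by
      show (⁅x.1, (y + z).1⁆, (0 : Fin N → ℝ))
          = (⁅x.1, y.1⁆, (0 : Fin N → ℝ)) + (⁅x.1, z.1⁆, (0 : Fin N → ℝ))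
      simp [Prod.ext_iff, lie_add]
    lie_self := fun x => by
      show (⁅x.1, x.1⁆, (0 : Fin N → ℝ)) = 0
      simp [Prod.ext_iff]
    leibniz_lie := fun x y z => by
      show (⁅x.1, ⁅y.1, z.1⁆⁆, (0 : Fin N → ℝ))
          = (⁅⁅x.1, y.1⁆, z.1⁆, (0 : Fin N → ℝ)) + (⁅y.1, ⁅x.1, z.1⁆⁆, (0 : Fin N → ℝ))
      simp [Prod.ext_iff] }

/-- The product Lie algebra structure on `𝔤 × ℝᴺ`. -/
noncomputable instance prodLieAlgebra (L : Type*) [LieRing L] [LieAlgebra ℝ L] (N : ℕ) :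
    LieAlgebra ℝ (L × (Fin N → ℝ)) :=
  { (inferInstance : Module ℝ (L × (Fin N → ℝ))) with
    lie_smul := fun t x y => by
      show (⁅x.1, (t • y).1⁆, (0 : Fin N → ℝ)) = t • (⁅x.1, y.1⁆, (0 : Fin N → ℝ))
      simp [Prod.ext_iff, Prod.smul_fst] }

lemma prod_bracket_eq {L : Type*} [LieRing L] {N : ℕ} (x y : L × (Fin N → ℝ)) :
    ⁅x, y⁆ = (⁅x.1, y.1⁆, (0 : Fin N → ℝ)) := rfl


/-- `(𝔤, 𝔤₁)` satisfies property 𝒞_k if and only if `(𝔤 × ℝᴺ, 𝔤₁ × ℝᴺ)` satisfies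
property 𝒞_k. -/
theorem propertyC_prod_iff (L : Type*) [LieRing L] [LieAlgebra ℝ L] [FiniteDimensional ℝ L]
    (g1 : Submodule ℝ L) (k N : ℕ) (hk1 : 1 ≤ k) (hk : k ≤ finrank ℝ ↥g1) (hN : 1 ≤ N) :
    PropertyC L g1 k ↔
      PropertyC (L × (Fin N → ℝ)) (g1.prod (⊤ : Submodule ℝ (Fin N → ℝ))) k := by
  set F := Fin N → ℝ
  set G : Submodule ℝ (L × F) := g1.prod ⊤ with hG
  have hGrank : finrank ℝ ↥G = finrank ℝ ↥g1 + N := by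
    rw [hG, finrank_prod_submodule, finrank_top, Module.finrank_fin_fun]
  constructor
  · -- forward
    intro P1 W hWG hWrank
    rw [hGrank] at hWrank
    set πW : Submodule ℝ L := W.map (LinearMap.fst ℝ L F) with hπW
    have hπWg1 : πW ≤ g1 := by
      rintro x ⟨a, haW, rfl⟩
      exact (hWG haW).1
    have hWle : W ≤ πW.prod ⊤ := by
      intro a ha
      exact ⟨⟨a, ha, rfl⟩, trivial⟩
    have hπWrank : finrank ℝ ↥g1 - k ≤ finrank ℝ ↥πW := by
      have := Submodule.finrank_mono hWle
      rw [finrank_prod_submodule, finrank_top, Module.finrank_fin_fun] at this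
      omega
    obtain ⟨w', hw'le, hw'rank⟩ := exists_submodule_finrank_eq πW _ hπWrank
    obtain ⟨h₀, hh₀g1, hh₀rank, hh₀ab, hh₀inf, hh₀sup⟩ := P1 w' (hw'le.trans hπWg1) hw'rank
    set H' : Submodule ℝ (L × F) := h₀.prod ⊤ with hH'
    have hH'G : H' ≤ G := Submodule.prod_mono hh₀g1 le_rfl
    have hH'rank : finrank ℝ ↥H' = k + N := by
      rw [hH', finrank_prod_submodule, finrank_top, Module.finrank_fin_fun, hh₀rank]
    have hsup : W ⊔ H' = G := by
      apply le_antisymm (sup_le hWG hH'G)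
      intro p hp
      have hp1 : p.1 ∈ w' ⊔ h₀ := hh₀sup ▸ hp.1
      obtain ⟨a, ha, b, hb, hab⟩ := Submodule.mem_sup.mp hp1
      obtain ⟨y, hyW, hy1⟩ := hw'le ha
      refine Submodule.mem_sup.mpr ⟨y, hyW, p - y, ⟨?_, trivial⟩, by abel⟩
      show (p - y).1 ∈ h₀
      have hy1' : y.1 = a := hy1
      have : (p - y).1 = b := by
        rw [Prod.fst_sub, hy1', ← hab]; abel
      rw [this]; exact hb
    have hinf_rank : finrank ℝ ↥(W ⊓ H') = N := by
      have := Submodule.finrank_sup_add_finrank_inf_eq W H'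
      rw [hsup, hGrank, hH'rank, hWrank] at this
      omega
    -- complement of W ⊓ H' inside H'
    set K0 : Submodule ℝ ↥H' := (W ⊓ H').comap H'.subtype with hK0
    obtain ⟨q, hq⟩ := Submodule.exists_isCompl K0
    set H : Submodule ℝ (L × F) := q.map H'.subtype with hHdef
    have hHle : H ≤ H' := Submodule.map_subtype_le _ _
    have hK0map : K0.map H'.subtype = W ⊓ H' := by
      rw [hK0, Submodule.map_comap_subtype]
      exact inf_eq_right.mpr inf_le_right
    have hK0rank : finrank ℝ ↥K0 = N := by
      have h2 := Submodule.finrank_map_subtype_eq H' K0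
      rw [hK0map, hinf_rank] at h2
      omega
    have hHrank : finrank ℝ ↥H = k := by
      have h1 : finrank ℝ ↥K0 + finrank ℝ ↥q = finrank ℝ ↥H' :=
        Submodule.finrank_add_eq_of_isCompl hq
      rw [hHdef, Submodule.finrank_map_subtype_eq]
      omega
    refine ⟨H, hHle.trans hH'G, hHrank, ?_, ?_, ?_⟩
    · intro x hx y hy
      have hx1 : x.1 ∈ h₀ := (hHle hx).1
      have hy1 : y.1 ∈ h₀ := (hHle hy).1
      rw [prod_bracket_eq, hh₀ab _ hx1 _ hy1]
      rfl
    · rw [eq_bot_iff]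
      rintro x ⟨hxW, hxH⟩
      obtain ⟨y, hyq, rfl⟩ := hxH
      have hy0 : y = 0 := by
        have hmem : y ∈ K0 ⊓ q := ⟨⟨hxW, y.2⟩, hyq⟩
        rw [hq.inf_eq_bot] at hmem
        exact (Submodule.mem_bot ℝ).mp hmem
      simp [hy0]
    · have hH'le : H' ≤ W ⊔ H := by
        calc H' = (K0 ⊔ q).map H'.subtype := by rw [hq.sup_eq_top, Submodule.map_subtype_top]
        _ = (W ⊓ H') ⊔ H := by rw [Submodule.map_sup, hK0map, hHdef]
        _ ≤ W ⊔ H := sup_le_sup_right inf_le_left H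
      apply le_antisymm (sup_le hWG (hHle.trans hH'G))
      rw [← hsup]
      exact sup_le le_sup_left hH'le
  · -- backward
    intro P2 w hwg1 hwrank
    set W : Submodule ℝ (L × F) := w.prod ⊤ with hW
    have hWG : W ≤ G := Submodule.prod_mono hwg1 le_rfl
    have hWrank : finrank ℝ ↥W = finrank ℝ ↥G - k := by
      rw [hW, finrank_prod_submodule, finrank_top, Module.finrank_fin_fun, hwrank, hGrank]
      omega
    obtain ⟨H, hHG, hHrank, hHab, hHinf, hHsup⟩ := P2 W hWG hWrank
    set f : ↥H →ₗ[ℝ] L := (LinearMap.fst ℝ L F).comp H.subtype with hf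
    have hfin : Function.Injective f := by
      rw [← LinearMap.ker_eq_bot, eq_bot_iff]
      intro a ha
      have ha0 : ((a : L × F)).1 = 0 := ha
      have haW : (a : L × F) ∈ W := ⟨by rw [ha0]; exact w.zero_mem, trivial⟩
      have : (a : L × F) ∈ W ⊓ H := ⟨haW, a.2⟩
      rw [hHinf] at this
      simpa using Subtype.ext (by simpa using this)
    set h : Submodule ℝ L := H.map (LinearMap.fst ℝ L F) with hh
    have hrange : LinearMap.range f = h := by
      rw [hf, LinearMap.range_comp, Submodule.range_subtype, hh]
    refine ⟨h, ?_, ?_, ?_, ?_, ?_⟩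
    · rintro x ⟨a, haH, rfl⟩
      exact (hHG haH).1
    · rw [← hrange, LinearMap.finrank_range_of_inj hfin, hHrank]
    · rintro x ⟨a, haH, rfl⟩ y ⟨b, hbH, rfl⟩
      have := hHab a haH b hbH
      rw [prod_bracket_eq] at this
      exact congrArg Prod.fst this
    · rw [eq_bot_iff]
      rintro x ⟨hxw, a, haH, rfl⟩
      have haW : a ∈ W := ⟨hxw, trivial⟩
      have ha0 : a = 0 := by
        have hmem : a ∈ W ⊓ H := ⟨haW, haH⟩
        rw [hHinf] at hmem
        exact (Submodule.mem_bot ℝ).mp hmem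
      simp [ha0]
    · apply le_antisymm (sup_le hwg1 (by rintro x ⟨a, haH, rfl⟩; exact (hHG haH).1))
      intro x hx
      have : ((x, 0) : L × F) ∈ W ⊔ H := by rw [hHsup]; exact ⟨hx, trivial⟩
      obtain ⟨u, hu, v, hv, huv⟩ := Submodule.mem_sup.mp this
      have hx1 : x = u.1 + v.1 := by
        have := congrArg Prod.fst huv
        simpa using this.symm
      rw [hx1]
      exact Submodule.add_mem_sup hu.1 ⟨v, hv, rfl⟩
end

section
/- Let 𝔤 be a finite-dimensional real Lie algebra, 𝔤₁ ⊆ 𝔤 a linear subspace, and k an integer with 2 ≤ k ≤ dim 𝔤₁. If (𝔤, 𝔤₁) satisfies property 𝒞_k, then (𝔤, 𝔤₁) satisfies property 𝒞_h for every integer h with 1 ≤ h ≤ k. -/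
open Module

/-- If `(𝔤, 𝔤₁)` satisfies property 𝒞_k with `2 ≤ k ≤ dim 𝔤₁`, then it satisfies property 𝒞_h
for every `1 ≤ h ≤ k`. -/
theorem propertyC_of_le (L : Type*) [LieRing L] [LieAlgebra ℝ L] [FiniteDimensional ℝ L]
    (g1 : Submodule ℝ L) (k : ℕ) (hk2 : 2 ≤ k) (hkm : k ≤ finrank ℝ ↥g1)
    (hC : PropertyC L g1 k) :
    ∀ h : ℕ, 1 ≤ h → h ≤ k → PropertyC L g1 h := by
  intro h h1 hhk w hwle hwrank
  -- pick a subspace w' ≤ w of dimension finrank g1 - k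
  have hdim : finrank ℝ ↥g1 - k ≤ finrank ℝ ↥w := by omega
  obtain ⟨f, hf⟩ := exists_linearIndependent_of_le_finrank hdim
  set w'in : Submodule ℝ ↥w := Submodule.span ℝ (Set.range f) with hw'in
  set w' : Submodule ℝ L := w'in.map w.subtype with hw'
  have hw'le : w' ≤ w := Submodule.map_subtype_le _ _
  have hw'rank : finrank ℝ ↥w' = finrank ℝ ↥g1 - k := by
    rw [hw', Submodule.finrank_map_subtype_eq, hw'in, finrank_span_eq_card hf,
      Fintype.card_fin]
  obtain ⟨H, hHle, hHrank, hHcomm, _, hsup⟩ := hC w' (hw'le.trans hwle) hw'rank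
  -- w ⊔ H = g1
  have hwsup : w ⊔ H = g1 := le_antisymm (sup_le hwle hHle)
    (by rw [← hsup]; exact sup_le_sup_right hw'le H)
  -- dimension of w ⊓ H
  have hdimg1 : h ≤ finrank ℝ ↥g1 := hhk.trans hkm
  have hinf : finrank ℝ ↥(w ⊓ H) = k - h := by
    have := Submodule.finrank_sup_add_finrank_inf_eq w H
    rw [hwsup, hwrank, hHrank] at this
    omega
  -- complement of w ⊓ H inside H
  set u : Submodule ℝ ↥H := (w ⊓ H).comap H.subtype with hu
  obtain ⟨c, hc⟩ := Submodule.exists_isCompl u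
  set H' : Submodule ℝ L := c.map H.subtype with hH'
  have hH'le : H' ≤ H := Submodule.map_subtype_le _ _
  have humap : u.map H.subtype = w ⊓ H := by
    rw [hu, Submodule.map_comap_eq, Submodule.range_subtype]
    exact inf_eq_right.mpr inf_le_right
  have hinj : Function.Injective H.subtype := Subtype.coe_injective
  refine ⟨H', hH'le.trans hHle, ?_, ?_, ?_, ?_⟩
  · -- dimension h
    have h1' := Submodule.finrank_add_eq_of_isCompl hc
    have h2' : finrank ℝ ↥u = k - h := by
      rw [← hinf, ← humap, Submodule.finrank_map_subtype_eq]
    rw [hH', Submodule.finrank_map_subtype_eq]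
    omega
  · intro x hx y hy
    exact hHcomm x (hH'le hx) y (hH'le hy)
  · -- w ⊓ H' = ⊥
    have : w ⊓ H' = (w ⊓ H) ⊓ H' := by
      rw [inf_assoc, inf_eq_right.mpr hH'le]
    rw [this, ← humap, hH', ← Submodule.map_inf _ hinj, hc.inf_eq_bot, Submodule.map_bot]
  · -- w ⊔ H' = g1
    have hsup' : (w ⊓ H) ⊔ H' = H := by
      rw [← humap, hH', ← Submodule.map_sup, hc.sup_eq_top, Submodule.map_top,
        Submodule.range_subtype]
    calc w ⊔ H' = w ⊔ ((w ⊓ H) ⊔ H') := by rw [← sup_assoc, sup_eq_left.mpr (inf_le_left : w ⊓ H ≤ w)]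
      _ = w ⊔ H := by rw [hsup']
      _ = g1 := hwsup
end

section
/- Let Ω ⊆ ℝ^3 be open and u ∈ BV_H(Ω) with respect to the horizontal vector fields of ℍ¹, with μ = (μ_1, μ_2) representing D_H u = (X u, Y u). Then μ satisfies the second-order horizontal curl equations of ℍ¹ in the sense of distributions: for every φ ∈ C_c^∞(Ω), (1) ∫ (X Y φ) dμ_1 − 2 ∫ (Y X φ) dμ_1 + ∫ (X X φ) dμ_2 = 0, and (2) ∫ (Y Y φ) dμ_1 − 2 ∫ (X Y φ) dμ_2 + ∫ (Y X φ) dμ_2 = 0 (these are the distributional forms of Y X μ_1 − 2 X Y μ_1 + X X μ_2 = 0 and Y Y μ_1 − 2 Y X μ_2 + X Y μ_2 = 0). -/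
open MeasureTheory Real
open scoped ENNReal NNReal

noncomputable section

/-- Partial derivative of `f : ℝⁿ → ℝ` in the `j`-th coordinate direction. -/
def pd {n : ℕ} (j : Fin n) (f : (Fin n → ℝ) → ℝ) (x : Fin n → ℝ) : ℝ :=
  fderiv ℝ f x (Pi.single j 1)

/-- Integral of `f` with respect to a signed measure, via the Jordan decomposition. -/
def sint {α : Type*} [MeasurableSpace α] (μ : SignedMeasure α) (f : α → ℝ) : ℝ :=
  (∫ x, f x ∂μ.toJordanDecomposition.posPart) - ∫ x, f x ∂μ.toJordanDecomposition.negPart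

/-- `φ` is a C¹ function with compact support contained in the open set `U`. -/
def IsCc1 {E : Type*} [NormedAddCommGroup E] [NormedSpace ℝ E] (U : Set E) (φ : E → ℝ) : Prop :=
  ContDiff ℝ 1 φ ∧ HasCompactSupport φ ∧ tsupport φ ⊆ U

/-! ℍ¹ in exponential coordinates `(x, y, t) : Fin 3 → ℝ` (indices `0, 1, 2`); the horizontal
vector fields are `X = ∂_x - (y/2) ∂_t` and `Y = ∂_y + (x/2) ∂_t`. -/

/-- `X = ∂_x - (y/2) ∂_t` acting on functions on ℍ¹. -/
def H1X (φ : (Fin 3 → ℝ) → ℝ) (p : Fin 3 → ℝ) : ℝ := pd 0 φ p - p 1 / 2 * pd 2 φ p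

/-- `Y = ∂_y + (x/2) ∂_t`. -/
def H1Y (φ : (Fin 3 → ℝ) → ℝ) (p : Fin 3 → ℝ) : ℝ := pd 1 φ p + p 0 / 2 * pd 2 φ p

/-- The `ℝ²`-valued measure `μ = (μ₁, μ₂)` represents `D_H u = (Xu, Yu)` on `Ω ⊆ ℍ¹`. -/
def RepH1 (Ω : Set (Fin 3 → ℝ)) (u : (Fin 3 → ℝ) → ℝ)
    (μ : Fin 2 → SignedMeasure (Fin 3 → ℝ)) : Prop :=
  (∀ i s, μ i s = μ i (s ∩ Ω)) ∧
  ∀ φ : Fin 2 → (Fin 3 → ℝ) → ℝ, (∀ i, IsCc1 Ω (φ i)) →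
    (∑ i, sint (μ i) (φ i)) = ∫ x in Ω, u x * (H1X (φ 0) x + H1Y (φ 1) x) ∂volume

/-!
Testing the representation of `D_H u` with the horizontal fields `(XYφ - 2YXφ, XXφ)` and
`(YYφ, YXφ - 2XYφ)` produces the two left-hand sides, while the right-hand sides
`∫ u (Xψ₁ + Yψ₂)` vanish: the two horizontal divergences are `[X, [X, Y]]φ` and `[[X, Y], Y]φ`,
which are zero because `[X, Y] = ∂_t` commutes with `X` and `Y`.
-/

open scoped ContDiff

section PartialDerivative

variable {n : ℕ} {f g : (Fin n → ℝ) → ℝ}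

theorem ContDiff.pd (hf : ContDiff ℝ ∞ f) (j : Fin n) : ContDiff ℝ ∞ (pd j f) :=
  (ContinuousLinearMap.apply ℝ ℝ (Pi.single j 1)).contDiff.comp (hf.fderiv_right le_rfl)

theorem pd_add (hf : Differentiable ℝ f) (hg : Differentiable ℝ g) (j : Fin n) :
    pd j (f + g) = pd j f + pd j g := by
  ext x
  simp [pd, fderiv_add (hf x) (hg x)]

theorem pd_sub (hf : Differentiable ℝ f) (hg : Differentiable ℝ g) (j : Fin n) :
    pd j (f - g) = pd j f - pd j g := by
  ext x
  simp [pd, fderiv_sub (hf x) (hg x)]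

theorem pd_const_smul (c : ℝ) (j : Fin n) : pd j (c • f) = c • pd j f := by
  ext x
  simp [pd, fderiv_const_smul_field]

theorem pd_coord_div_two_mul (hg : Differentiable ℝ g) (i j : Fin n) :
    pd j ((fun p => p i / 2) * g)
      = (fun p => p i / 2) * pd j g + (fun _ => if i = j then 1 / 2 else 0) * g := by
  ext x
  have hcoord : HasFDerivAt (fun p : Fin n → ℝ => p i / 2)
      ((2⁻¹ : ℝ) • ContinuousLinearMap.proj (R := ℝ) (φ := fun _ : Fin n => ℝ) i) x := by
    simpa [div_eq_mul_inv] using (hasFDerivAt_apply i x).mul_const (2⁻¹ : ℝ)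
  rw [pd, fderiv_mul hcoord.differentiableAt (hg x), hcoord.fderiv]
  by_cases hij : i = j <;> simp [hij, pd, mul_comm]

theorem pd_comm (hf : ContDiff ℝ 2 f) (i j : Fin n) : pd i (pd j f) = pd j (pd i f) := by
  ext x
  have hsymm : IsSymmSndFDerivAt ℝ f x :=
    hf.contDiffAt.isSymmSndFDerivAt (by simp [minSmoothness_of_isRCLikeNormedField])
  have hd : DifferentiableAt ℝ (fderiv ℝ f) x :=
    (hf.fderiv_right (m := 1) (by norm_num)).differentiable one_ne_zero x
  have hpd : ∀ v w, fderiv ℝ (fun y => fderiv ℝ f y v) x w = fderiv ℝ (fderiv ℝ f) x w v := by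
    intro v w
    simp [fderiv_clm_apply hd (differentiableAt_const v)]
  unfold pd
  rw [hpd, hpd, hsymm]

theorem tsupport_pd_subset (j : Fin n) : tsupport (pd j f) ⊆ tsupport f :=
  tsupport_fderiv_apply_subset ℝ _

end PartialDerivative

section HorizontalFields

variable {f g : (Fin 3 → ℝ) → ℝ}

theorem H1X_eq (f : (Fin 3 → ℝ) → ℝ) : H1X f = pd 0 f - (fun p => p 1 / 2) * pd 2 f := rfl

theorem H1Y_eq (f : (Fin 3 → ℝ) → ℝ) : H1Y f = pd 1 f + (fun p => p 0 / 2) * pd 2 f := rfl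

theorem ContDiff.H1X (hf : ContDiff ℝ ∞ f) : ContDiff ℝ ∞ (H1X f) :=
  (hf.pd 0).sub ((by fun_prop : ContDiff ℝ ∞ fun p : Fin 3 → ℝ => p 1 / 2).mul (hf.pd 2))

theorem ContDiff.H1Y (hf : ContDiff ℝ ∞ f) : ContDiff ℝ ∞ (H1Y f) :=
  (hf.pd 1).add ((by fun_prop : ContDiff ℝ ∞ fun p : Fin 3 → ℝ => p 0 / 2).mul (hf.pd 2))

theorem H1X_add (hf : Differentiable ℝ f) (hg : Differentiable ℝ g) :
    H1X (f + g) = H1X f + H1X g := by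
  simp only [H1X_eq, pd_add hf hg]
  ring

theorem H1Y_add (hf : Differentiable ℝ f) (hg : Differentiable ℝ g) :
    H1Y (f + g) = H1Y f + H1Y g := by
  simp only [H1Y_eq, pd_add hf hg]
  ring

theorem H1X_sub (hf : Differentiable ℝ f) (hg : Differentiable ℝ g) :
    H1X (f - g) = H1X f - H1X g := by
  simp only [H1X_eq, pd_sub hf hg]
  ring

theorem H1Y_sub (hf : Differentiable ℝ f) (hg : Differentiable ℝ g) :
    H1Y (f - g) = H1Y f - H1Y g := by
  simp only [H1Y_eq, pd_sub hf hg]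
  ring

theorem H1X_const_smul (c : ℝ) (f : (Fin 3 → ℝ) → ℝ) : H1X (c • f) = c • H1X f := by
  ext p
  simp only [H1X, pd_const_smul, Pi.smul_apply, smul_eq_mul]
  ring

theorem H1Y_const_smul (c : ℝ) (f : (Fin 3 → ℝ) → ℝ) : H1Y (c • f) = c • H1Y f := by
  ext p
  simp only [H1Y, pd_const_smul, Pi.smul_apply, smul_eq_mul]
  ring

theorem pd_H1X (hf : ContDiff ℝ ∞ f) (j : Fin 3) :
    pd j (H1X f) = pd j (pd 0 f)
      - ((fun p => p 1 / 2) * pd j (pd 2 f)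
        + (fun _ => if 1 = j then 1 / 2 else 0) * pd 2 f) := by
  have hd : ∀ i, Differentiable ℝ (pd i f) := fun i => (hf.pd i).differentiable (by simp)
  rw [H1X_eq, pd_sub (hd 0) (by fun_prop), pd_coord_div_two_mul (hd 2)]

theorem pd_H1Y (hf : ContDiff ℝ ∞ f) (j : Fin 3) :
    pd j (H1Y f) = pd j (pd 1 f)
      + ((fun p => p 0 / 2) * pd j (pd 2 f)
        + (fun _ => if 0 = j then 1 / 2 else 0) * pd 2 f) := by
  have hd : ∀ i, Differentiable ℝ (pd i f) := fun i => (hf.pd i).differentiable (by simp)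
  rw [H1Y_eq, pd_add (hd 1) (by fun_prop), pd_coord_div_two_mul (hd 2)]

theorem H1X_H1Y (hf : ContDiff ℝ ∞ f) : H1X (H1Y f) = H1Y (H1X f) + pd 2 f := by
  have hcomm := pd_comm (contDiff_infty.1 hf 2)
  rw [H1X_eq (H1Y f), H1Y_eq (H1X f), pd_H1Y hf, pd_H1Y hf, pd_H1X hf, pd_H1X hf,
    hcomm 0 1, hcomm 0 2, hcomm 1 2]
  ext p
  simp only [Fin.reduceEq, ↓reduceIte, Pi.sub_apply, Pi.add_apply, Pi.mul_apply]
  ring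

theorem H1X_pd_two (hf : ContDiff ℝ ∞ f) : H1X (pd 2 f) = pd 2 (H1X f) := by
  rw [H1X_eq (pd 2 f), pd_H1X hf, pd_comm (contDiff_infty.1 hf 2) 0 2]
  ext p
  simp

theorem H1Y_pd_two (hf : ContDiff ℝ ∞ f) : H1Y (pd 2 f) = pd 2 (H1Y f) := by
  rw [H1Y_eq (pd 2 f), pd_H1Y hf, pd_comm (contDiff_infty.1 hf 2) 1 2]
  ext p
  simp

theorem H1X_bracket_H1X_H1Y_eq_zero (hf : ContDiff ℝ ∞ f) :
    H1X (H1X (H1Y f) - (2 : ℝ) • H1Y (H1X f)) + H1Y (H1X (H1X f)) = 0 := by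
  have hd : ∀ {g : (Fin 3 → ℝ) → ℝ}, ContDiff ℝ ∞ g → Differentiable ℝ g :=
    fun hg => hg.differentiable (by simp)
  rw [H1X_sub (hd hf.H1Y.H1X) ((hd hf.H1X.H1Y).const_smul (2 : ℝ)), H1X_const_smul,
    H1X_H1Y hf, H1X_add (hd hf.H1X.H1Y) (hd (hf.pd 2)), H1X_H1Y hf.H1X, H1X_pd_two hf]
  module

theorem bracket_H1X_H1Y_H1Y_eq_zero (hf : ContDiff ℝ ∞ f) :
    H1X (H1Y (H1Y f)) + H1Y (H1Y (H1X f) - (2 : ℝ) • H1X (H1Y f)) = 0 := by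
  have hd : ∀ {g : (Fin 3 → ℝ) → ℝ}, ContDiff ℝ ∞ g → Differentiable ℝ g :=
    fun hg => hg.differentiable (by simp)
  rw [H1Y_sub (hd hf.H1X.H1Y) ((hd hf.H1Y.H1X).const_smul (2 : ℝ)), H1Y_const_smul,
    H1X_H1Y hf.H1Y, H1X_H1Y hf, H1Y_add (hd hf.H1X.H1Y) (hd (hf.pd 2)), H1Y_pd_two hf]
  module

theorem tsupport_H1X_subset : tsupport (H1X f) ⊆ tsupport f :=
  (tsupport_sub _ _).trans <| Set.union_subset (tsupport_pd_subset 0) <|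
    tsupport_mul_subset_right.trans (tsupport_pd_subset 2)

theorem tsupport_H1Y_subset : tsupport (H1Y f) ⊆ tsupport f :=
  (tsupport_add _ _).trans <| Set.union_subset (tsupport_pd_subset 1) <|
    tsupport_mul_subset_right.trans (tsupport_pd_subset 2)

end HorizontalFields

section TestFunctions

variable {E : Type*} [NormedAddCommGroup E] [NormedSpace ℝ E] {U : Set E} {f g : E → ℝ}

theorem IsCc1.of_tsupport_subset (hg : IsCc1 U g) (hf : ContDiff ℝ 1 f)
    (hfg : tsupport f ⊆ tsupport g) : IsCc1 U f :=
  ⟨hf, hg.2.1.of_isClosed_subset (isClosed_tsupport f) hfg, hfg.trans hg.2.2⟩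

theorem IsCc1.sub (hf : IsCc1 U f) (hg : IsCc1 U g) : IsCc1 U (f - g) :=
  ⟨hf.1.sub hg.1, hf.2.1.sub hg.2.1,
    (tsupport_sub f g).trans (Set.union_subset hf.2.2 hg.2.2)⟩

theorem IsCc1.const_smul (hf : IsCc1 U f) (c : ℝ) : IsCc1 U (c • f) :=
  ⟨hf.1.const_smul c, hf.2.1.smul_left,
    (tsupport_smul_subset_right (fun _ => c) f).trans hf.2.2⟩

end TestFunctions

theorem IsCc1.H1X {U : Set (Fin 3 → ℝ)} {f : (Fin 3 → ℝ) → ℝ} (h : IsCc1 U f)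
    (hf : ContDiff ℝ ∞ f) : IsCc1 U (H1X f) :=
  h.of_tsupport_subset (contDiff_infty.1 hf.H1X 1) tsupport_H1X_subset

theorem IsCc1.H1Y {U : Set (Fin 3 → ℝ)} {f : (Fin 3 → ℝ) → ℝ} (h : IsCc1 U f)
    (hf : ContDiff ℝ ∞ f) : IsCc1 U (H1Y f) :=
  h.of_tsupport_subset (contDiff_infty.1 hf.H1Y 1) tsupport_H1Y_subset

section SignedIntegral

variable {α : Type*} [MeasurableSpace α] (μ : SignedMeasure α)

theorem sint_const_smul (c : ℝ) (f : α → ℝ) : sint μ (c • f) = c * sint μ f := by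
  simp only [sint, Pi.smul_apply, smul_eq_mul, integral_const_mul]
  ring

theorem sint_sub [TopologicalSpace α] [OpensMeasurableSpace α] {f g : α → ℝ}
    (hf : Continuous f) (hfc : HasCompactSupport f) (hg : Continuous g)
    (hgc : HasCompactSupport g) : sint μ (f - g) = sint μ f - sint μ g := by
  have hfi (ν : Measure α) [IsFiniteMeasure ν] : Integrable f ν :=
    hf.integrable_of_hasCompactSupport hfc
  have hgi (ν : Measure α) [IsFiniteMeasure ν] : Integrable g ν :=
    hg.integrable_of_hasCompactSupport hgc
  simp only [sint, Pi.sub_apply]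
  rw [integral_sub (hfi _) (hgi _), integral_sub (hfi _) (hgi _)]
  ring

end SignedIntegral

theorem RepH1.sint_add_sint_eq_zero {Ω : Set (Fin 3 → ℝ)} {u : (Fin 3 → ℝ) → ℝ}
    {μ : Fin 2 → SignedMeasure (Fin 3 → ℝ)} (hμ : RepH1 Ω u μ) {ψ₁ ψ₂ : (Fin 3 → ℝ) → ℝ}
    (h₁ : IsCc1 Ω ψ₁) (h₂ : IsCc1 Ω ψ₂) (hdiv : H1X ψ₁ + H1Y ψ₂ = 0) :
    sint (μ 0) ψ₁ + sint (μ 1) ψ₂ = 0 := by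
  have hdiv' : ∀ x, H1X ψ₁ x + H1Y ψ₂ x = 0 := congrFun hdiv
  simpa [Fin.sum_univ_two, hdiv'] using hμ.2 ![ψ₁, ψ₂] (Fin.forall_fin_two.2 ⟨h₁, h₂⟩)

theorem horizontal_curl_H1_general (Ω : Set (Fin 3 → ℝ))
    (u : (Fin 3 → ℝ) → ℝ)
    (μ : Fin 2 → SignedMeasure (Fin 3 → ℝ)) (hμ : RepH1 Ω u μ) :
    ∀ φ : (Fin 3 → ℝ) → ℝ, ContDiff ℝ (⊤ : ℕ∞) φ → HasCompactSupport φ → tsupport φ ⊆ Ω →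
      (sint (μ 0) (H1X (H1Y φ)) - 2 * sint (μ 0) (H1Y (H1X φ)) + sint (μ 1) (H1X (H1X φ))
        = 0) ∧
      (sint (μ 0) (H1Y (H1Y φ)) - 2 * sint (μ 1) (H1X (H1Y φ)) + sint (μ 1) (H1Y (H1X φ))
        = 0) := by
  intro φ hφ hφc hφΩ
  have hφ₁ : IsCc1 Ω φ := ⟨contDiff_infty.1 hφ 1, hφc, hφΩ⟩
  have hXY := (hφ₁.H1Y hφ).H1X hφ.H1Y
  have hYX := (hφ₁.H1X hφ).H1Y hφ.H1X
  have hXX := (hφ₁.H1X hφ).H1X hφ.H1X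
  have hYY := (hφ₁.H1Y hφ).H1Y hφ.H1Y
  constructor
  · have h := hμ.sint_add_sint_eq_zero (hXY.sub (hYX.const_smul 2)) hXX
      (H1X_bracket_H1X_H1Y_eq_zero hφ)
    rw [sint_sub _ hXY.1.continuous hXY.2.1 (hYX.const_smul 2).1.continuous
      (hYX.const_smul 2).2.1, sint_const_smul] at h
    linarith
  · have h := hμ.sint_add_sint_eq_zero hYY (hYX.sub (hXY.const_smul 2))
      (bracket_H1X_H1Y_H1Y_eq_zero hφ)
    rw [sint_sub _ hYX.1.continuous hYX.2.1 (hXY.const_smul 2).1.continuous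
      (hXY.const_smul 2).2.1, sint_const_smul] at h
    linarith

/-- The components of `D_H u` of a `BV_H` function on `Ω ⊆ ℍ¹` satisfy the second-order
horizontal curl equations in the sense of distributions. -/
theorem horizontal_curl_H1 (Ω : Set (Fin 3 → ℝ)) (hΩ : IsOpen Ω)
    (u : (Fin 3 → ℝ) → ℝ) (hu : IntegrableOn u Ω volume)
    (μ : Fin 2 → SignedMeasure (Fin 3 → ℝ)) (hμ : RepH1 Ω u μ) :
    ∀ φ : (Fin 3 → ℝ) → ℝ, ContDiff ℝ (⊤ : ℕ∞) φ → HasCompactSupport φ → tsupport φ ⊆ Ω →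
      (sint (μ 0) (H1X (H1Y φ)) - 2 * sint (μ 0) (H1Y (H1X φ)) + sint (μ 1) (H1X (H1X φ))
        = 0) ∧
      (sint (μ 0) (H1Y (H1Y φ)) - 2 * sint (μ 1) (H1X (H1Y φ)) + sint (μ 1) (H1Y (H1X φ))
        = 0) :=
  horizontal_curl_H1_general Ω u μ hμ

end
end
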